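/- Suppose α > α_s := 1/(4|v_min|(1+v_min)), so that θ := 4α v_min(1+v_min) + 1 < 0. Then there exist real constants B > 0, r > 0, and φ such that, with ω := arctan(√|θ|) ∈ (0, π/2), X(v*,k) = B·r^{k-1}·cos((k-1)ω + φ) for all k ≥ 2. -/

import Mathlib

/-- Account value `X(v,k)` for feedback gain `α`, initial value `X0`, path `v`. -/
noncomputable def accountX (α X0 : ℝ) (v : ℕ → ℝ) : ℕ → ℝ
  | 0 => X0
  | 1 => X0
  | (k + 2) => accountX α X0 v (k + 1) + α * (1 + v k) * v (k + 1) * accountX α X0 v k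

/-- The distinguished path: `v*(0) = v_max` and `v*(k) = v_min` for `k ≥ 1`. -/
noncomputable def vstar (vmin vmax : ℝ) : ℕ → ℝ := fun k => if k = 0 then vmax else vmin

/-!
Along `v*` the account value satisfies, from the second step on, the constant-coefficient
recurrence `x (n + 2) = x (n + 1) + c x n` with `c = α v_min (1 + v_min)`. Its characteristic
polynomial `L ^ 2 - L - c` has discriminant `θ = 4c + 1 < 0`, hence the complex root
`L = (1 + i √|θ|) / 2 = r e^{iω}`, and every real solution is `Re (w L ^ n)` for a suitable `w`,
i.e. `‖w‖ r ^ n cos (n ω + arg w)`.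
-/

open Complex

theorem Complex.re_mul_pow_ofReal_mul_exp (w : ℂ) (r ω : ℝ) (n : ℕ) :
    (w * ((r : ℂ) * exp (ω * I)) ^ n).re = ‖w‖ * r ^ n * Real.cos (n * ω + arg w) := by
  have hpow : (w * ((r : ℂ) * exp (ω * I)) ^ n) =
      ((‖w‖ * r ^ n : ℝ) : ℂ) * exp ((n * ω + arg w : ℝ) * I) := by
    conv_lhs => rw [← norm_mul_exp_arg_mul_I w]
    rw [mul_pow, ← exp_nat_mul]
    push_cast
    rw [add_mul, exp_add]
    ring_nf
  rw [hpow, re_ofReal_mul, exp_ofReal_mul_I_re]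

theorem Complex.one_add_mul_I_eq (t : ℝ) :
    1 + t * I = (√(1 + t ^ 2) : ℂ) * exp (Real.arctan t * I) := by
  have hs : √(1 + t ^ 2) ≠ 0 := (Real.sqrt_pos.mpr (by positivity)).ne'
  apply Complex.ext
  · rw [re_ofReal_mul, exp_ofReal_mul_I_re, Real.cos_arctan]
    simp [hs]
  · rw [im_ofReal_mul, exp_ofReal_mul_I_im, Real.sin_arctan]
    simp [mul_div_cancel₀ _ hs]

theorem Complex.exists_re_eq_and_re_mul_eq {L : ℂ} (hL : L.im ≠ 0) (a b : ℝ) :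
    ∃ w : ℂ, w.re = a ∧ (w * L).re = b :=
  ⟨⟨a, (a * L.re - b) / L.im⟩, rfl, by simp only [mul_re]; field_simp; ring⟩

theorem eq_re_mul_pow_of_linearRecurrence {x : ℕ → ℝ} {p q : ℝ} {L w : ℂ}
    (hx : ∀ n, x (n + 2) = p * x (n + 1) + q * x n) (hL : L ^ 2 = p * L + q)
    (h0 : w.re = x 0) (h1 : (w * L).re = x 1) (n : ℕ) : x n = (w * L ^ n).re := by
  induction n using Nat.twoStepInduction with
  | zero => simpa using h0.symm
  | one => simpa using h1.symm
  | more n ihn ihn1 =>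
    have hpow : w * L ^ (n + 2) = p * (w * L ^ (n + 1)) + q * (w * L ^ n) := by
      linear_combination w * L ^ n * hL
    rw [hx, ihn, ihn1, hpow]
    simp

theorem accountX_vstar_add_three {α X0 vmin vmax : ℝ} (n : ℕ) : accountX α X0 (vstar vmin vmax) (n + 3) =
    accountX α X0 (vstar vmin vmax) (n + 2) +
      α * vmin * (1 + vmin) * accountX α X0 (vstar vmin vmax) (n + 1) := by
  simp only [accountX, vstar, Nat.add_one_ne_zero, if_false]
  ring

theorem exists_eq_mul_pow_mul_cos_of_linearRecurrence {x : ℕ → ℝ} {c t : ℝ}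
    (hx : ∀ n, x (n + 2) = x (n + 1) + c * x n) (ht : t ^ 2 = -(4 * c + 1)) (ht0 : t ≠ 0)
    (hx0 : x 0 ≠ 0) :
    ∃ B > (0 : ℝ), ∃ r > (0 : ℝ), ∃ φ : ℝ, ∀ n : ℕ,
      x n = B * r ^ n * Real.cos (n * Real.arctan t + φ) := by
  set L : ℂ := (1 + t * I) / 2 with hLdef
  have hLpolar : L = ((√(1 + t ^ 2) / 2 : ℝ) : ℂ) * exp (Real.arctan t * I) := by
    rw [hLdef, one_add_mul_I_eq]
    push_cast
    ring
  have hL : L ^ 2 = (1 : ℝ) * L + c := by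
    have ht' : (t : ℂ) ^ 2 = -(4 * c + 1) := by exact_mod_cast congrArg ofReal ht
    rw [hLdef, ofReal_one]
    linear_combination (t ^ 2 / 4 : ℂ) * I_sq - ht' / 4
  have hLim : L.im ≠ 0 := by simpa [L] using ht0
  obtain ⟨w, hw0, hw1⟩ := exists_re_eq_and_re_mul_eq hLim (x 0) (x 1)
  have hw : w ≠ 0 := fun h => hx0 (by simpa [h] using hw0.symm)
  refine ⟨‖w‖, norm_pos_iff.2 hw, √(1 + t ^ 2) / 2, by positivity, arg w, fun n => ?_⟩
  rw [eq_re_mul_pow_of_linearRecurrence (p := 1) (by simpa using hx) hL hw0 hw1 n, hLpolar,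
    re_mul_pow_ofReal_mul_exp]

theorem four_mul_mul_mul_add_one_neg_of_gt {α vmin : ℝ} (h1 : -1 < vmin) (h2 : vmin < 0)
    (hα : α > 1 / (4 * |vmin| * (1 + vmin))) : 4 * α * vmin * (1 + vmin) + 1 < 0 := by
  rw [abs_of_neg h2, gt_iff_lt, div_lt_iff₀ (by nlinarith)] at hα
  linarith

theorem oscillatory_closed_form_general (vmin vmax α X0 : ℝ)
    (h1 : -1 < vmin) (h2 : vmin < 0) (hX0 : 0 < X0)
    (hα : α > 1 / (4 * |vmin| * (1 + vmin))) :
    4 * α * vmin * (1 + vmin) + 1 < 0 ∧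
    0 < Real.arctan (Real.sqrt |4 * α * vmin * (1 + vmin) + 1|) ∧
    Real.arctan (Real.sqrt |4 * α * vmin * (1 + vmin) + 1|) < Real.pi / 2 ∧
    ∃ B > (0 : ℝ), ∃ r > (0 : ℝ), ∃ φ : ℝ, ∀ k ≥ 2,
      accountX α X0 (vstar vmin vmax) k =
        B * r ^ (k - 1) *
          Real.cos ((k - 1 : ℕ) * Real.arctan (Real.sqrt |4 * α * vmin * (1 + vmin) + 1|) + φ) := by
  have hθ := four_mul_mul_mul_add_one_neg_of_gt h1 h2 hα
  have ht : √|4 * α * vmin * (1 + vmin) + 1| ^ 2 = -(4 * (α * vmin * (1 + vmin)) + 1) := by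
    rw [Real.sq_sqrt (abs_nonneg _), abs_of_neg hθ]
    ring
  have ht0 : 0 < √|4 * α * vmin * (1 + vmin) + 1| :=
    Real.sqrt_pos.2 (abs_pos.2 hθ.ne)
  obtain ⟨B, hB, r, hr, φ, hclosed⟩ :=
    exists_eq_mul_pow_mul_cos_of_linearRecurrence
      (x := fun n => accountX α X0 (vstar vmin vmax) (n + 1))
      accountX_vstar_add_three ht ht0.ne' hX0.ne'
  refine ⟨hθ, Real.arctan_pos.2 ht0, Real.arctan_lt_pi_div_two _, B, hB, r, hr, φ,
    fun k hk => ?_⟩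
  obtain ⟨n, rfl⟩ : ∃ n, k = n + 1 := ⟨k - 1, by omega⟩
  exact hclosed n

/-- Oscillatory closed form: if `α > α_s`, then `θ := 4 α v_min (1+v_min) + 1 < 0` and,
with `ω := arctan √|θ| ∈ (0, π/2)`, there exist `B > 0`, `r > 0` and `φ` such that
`X(v*,k) = B r^{k-1} cos((k-1)ω + φ)` for all `k ≥ 2`. -/
theorem oscillatory_closed_form (vmin vmax α X0 : ℝ)
    (h1 : -1 < vmin) (h2 : vmin < 0) (h3 : 0 < vmax) (hX0 : 0 < X0)
    (hα : α > 1 / (4 * |vmin| * (1 + vmin))) :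
    4 * α * vmin * (1 + vmin) + 1 < 0 ∧
    0 < Real.arctan (Real.sqrt |4 * α * vmin * (1 + vmin) + 1|) ∧
    Real.arctan (Real.sqrt |4 * α * vmin * (1 + vmin) + 1|) < Real.pi / 2 ∧
    ∃ B > (0 : ℝ), ∃ r > (0 : ℝ), ∃ φ : ℝ, ∀ k ≥ 2,
      accountX α X0 (vstar vmin vmax) k =
        B * r ^ (k - 1) *
          Real.cos ((k - 1 : ℕ) * Real.arctan (Real.sqrt |4 * α * vmin * (1 + vmin) + 1|) + φ) :=
  oscillatory_closed_form_general vmin vmax α X0 h1 h2 hX0 hα
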